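/- arXiv:2208.14444 — 3 statements merged into one kernel-verified Lean document; each statement's English description precedes it below -/
import Mathlib

section
/- Let T be a measure-preserving map of a probability space, ψ : ℕ → ℝ_{>0}, and suppose there exists c₁ > 0 with ψ(2n) ≥ c₁ · ψ(n)² for all n ≥ 1, and (1/n) log ψ(n) → 0 as n → ∞. Then ψ(n) ≤ 2/c₁ for all n ≥ 1. -/
/-!
In fact `g := c₁ * ψ` stays below `1`: if `g n > 1`, then `g (2 m) ≥ g m ^ 2` forces
`g (2 ^ k * n) ≥ g n ^ (2 ^ k)`, so `log g` grows linearly along `2 ^ k * n` with slope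
`log (g n) / n > 0`, contradicting `log (ψ m) / m → 0`.
-/

open Filter Topology Real

lemma pow_two_pow_le_of_sq_le_two_mul {g : ℕ → ℝ} (hg : ∀ m, 1 ≤ m → g m ^ 2 ≤ g (2 * m))
    {n : ℕ} (hn : 1 ≤ n) (h0 : 0 ≤ g n) (k : ℕ) : g n ^ 2 ^ k ≤ g (2 ^ k * n) := by
  induction k with
  | zero => simp
  | succ k ih =>
    calc g n ^ 2 ^ (k + 1) = (g n ^ 2 ^ k) ^ 2 := by rw [pow_succ, pow_mul]
      _ ≤ g (2 ^ k * n) ^ 2 := by gcongr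
      _ ≤ g (2 * (2 ^ k * n)) := hg _ (Nat.one_le_iff_ne_zero.mpr (by positivity))
      _ = g (2 ^ (k + 1) * n) := by rw [pow_succ, mul_comm _ 2, mul_assoc]

lemma tendsto_comp_two_pow_mul_div_two_pow {f : ℕ → ℝ}
    (hf : Tendsto (fun m : ℕ => f m / m) atTop (𝓝 0)) {n : ℕ} (hn : 1 ≤ n) :
    Tendsto (fun k : ℕ => f (2 ^ k * n) / 2 ^ k) atTop (𝓝 0) := by
  have hsub : Tendsto (fun k : ℕ => 2 ^ k * n) atTop atTop :=
    (tendsto_pow_atTop_atTop_of_one_lt one_lt_two).atTop_mul_const' hn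
  have hn0 : (n : ℝ) ≠ 0 := by positivity
  convert ((hf.comp hsub).const_mul (n : ℝ)) using 1
  · ext k
    simp only [Function.comp_apply, Nat.cast_mul, Nat.cast_pow, Nat.cast_ofNat]
    field_simp
  · simp

lemma tendsto_log_const_mul_div {ψ : ℕ → ℝ} {c : ℝ} (hc : c ≠ 0)
    (hψ : Tendsto (fun m : ℕ => log (ψ m) / m) atTop (𝓝 0)) :
    Tendsto (fun m : ℕ => log (c * ψ m) / m) atTop (𝓝 0) := by
  have hdiff : ∀ m : ℕ, |log (c * ψ m) / m - log (ψ m) / m| ≤ |log c| / m := by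
    intro m
    have hlog : |log (c * ψ m) - log (ψ m)| ≤ |log c| := by
      by_cases hm : ψ m = 0
      · simp [hm]
      · rw [log_mul hc hm, add_sub_cancel_right]
    rw [← sub_div, abs_div, Nat.abs_cast]
    exact div_le_div_of_nonneg_right hlog m.cast_nonneg
  have hsmall : Tendsto (fun m : ℕ => log (c * ψ m) / m - log (ψ m) / m) atTop (𝓝 0) :=
    squeeze_zero_norm hdiff (tendsto_const_div_atTop_nhds_zero_nat _)
  simpa using hsmall.add hψ

lemma le_one_of_sq_le_two_mul {g : ℕ → ℝ} (hg : ∀ m, 1 ≤ m → g m ^ 2 ≤ g (2 * m))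
    (hlim : Tendsto (fun m : ℕ => log (g m) / m) atTop (𝓝 0)) {n : ℕ} (hn : 1 ≤ n) :
    g n ≤ 1 := by
  by_contra! hgn
  have hbound (k : ℕ) : log (g n) ≤ log (g (2 ^ k * n)) / 2 ^ k := by
    have hpow := pow_two_pow_le_of_sq_le_two_mul hg hn (by linarith) k
    have hlogpow : log (g n ^ 2 ^ k) = 2 ^ k * log (g n) := by
      rw [Real.log_pow]; push_cast; rfl
    rw [le_div_iff₀ (by positivity), mul_comm, ← hlogpow]
    exact log_le_log (by positivity) hpow
  have := ge_of_tendsto' (tendsto_comp_two_pow_mul_div_two_pow hlim hn) hbound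
  linarith [log_pos hgn]

theorem stmt_2_general (ψ : ℕ → ℝ) (c₁ : ℝ) (hc : 0 < c₁)
    (hsup : ∀ n, 1 ≤ n → c₁ * (ψ n) ^ 2 ≤ ψ (2 * n))
    (hlim : Filter.Tendsto (fun n : ℕ => Real.log (ψ n) / n) Filter.atTop (nhds 0)) :
    ∀ n, 1 ≤ n → ψ n ≤ 2 / c₁ := by
  intro n hn
  have hsq (m : ℕ) (hm : 1 ≤ m) : (c₁ * ψ m) ^ 2 ≤ c₁ * ψ (2 * m) := by
    rw [mul_pow, sq c₁, mul_assoc]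
    exact mul_le_mul_of_nonneg_left (hsup m hm) hc.le
  have hle : c₁ * ψ n ≤ 1 :=
    le_one_of_sq_le_two_mul (g := fun m => c₁ * ψ m) hsq
      (tendsto_log_const_mul_div hc.ne' hlim) hn
  calc ψ n ≤ 1 / c₁ := by rwa [le_div_iff₀ hc, mul_comm]
    _ ≤ 2 / c₁ := by gcongr; norm_num

/-- Exact exponential growth from supermultiplicativity. -/
theorem stmt_2 (ψ : ℕ → ℝ) (c₁ : ℝ) (hc : 0 < c₁)
    (hpos : ∀ n, 1 ≤ n → 0 < ψ n)
    (hsup : ∀ n, 1 ≤ n → c₁ * (ψ n) ^ 2 ≤ ψ (2 * n))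
    (hlim : Filter.Tendsto (fun n : ℕ => Real.log (ψ n) / n) Filter.atTop (nhds 0)) :
    ∀ n, 1 ≤ n → ψ n ≤ 2 / c₁ :=
  stmt_2_general ψ c₁ hc hsup hlim
end

section
/- Let T be a continuous map of a compact metric space and φ a bounded nonnegative measurable function with φ₀ := inf over T-invariant Borel probability measures μ of ∫ φ dμ satisfying φ₀ > 0. Define P(t) := sup over invariant μ of (h_μ(T) + t ∫ φ dμ). Then the map t ↦ P(t) is strictly increasing and continuous on ℝ, satisfies P(t+ε) − P(t) ≥ ε·φ₀ and P(t+ε) − P(t) ≤ ε·(1 + sup φ) for ε > 0, and tends to ±∞ as t → ±∞; hence there exists a unique real c with P(−c) = 0. -/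
open MeasureTheory Filter Set

/-!
Each invariant measure `μ` contributes the affine function `t ↦ h μ + t ∫ φ dμ`, whose slope lies
in `[φ₀, sup φ]`. The pressure is the supremum of these lines, so its increments over `[s, t]`
are squeezed between `(t - s) φ₀` and `(t - s) sup φ`. Since `φ₀ > 0`, the pressure is therefore
strictly increasing, Lipschitz and unbounded in both directions, hence a bijection of `ℝ`.
-/

section IncrementBounds

variable {f : ℝ → ℝ} {m M : ℝ}

theorem strictMono_of_sub_mul_le_sub (hm : 0 < m)
    (hf : ∀ s t, s ≤ t → (t - s) * m ≤ f t - f s) : StrictMono f := fun s t hst => by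
  nlinarith [hf s t hst.le]

theorem lipschitzWith_of_sub_le_sub_mul (hmono : Monotone f)
    (hf : ∀ s t, s ≤ t → f t - f s ≤ (t - s) * M) : LipschitzWith M.toNNReal f := by
  have key : ∀ s t, s ≤ t → dist (f s) (f t) ≤ M * dist s t := fun s t hst => by
    rw [Real.dist_eq, Real.dist_eq, abs_sub_comm, abs_of_nonneg (sub_nonneg.2 (hmono hst)),
      abs_sub_comm, abs_of_nonneg (sub_nonneg.2 hst), mul_comm]
    exact hf s t hst
  refine LipschitzWith.of_dist_le' fun s t => ?_
  rcases le_total s t with hst | hts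
  · exact key s t hst
  · rw [dist_comm, dist_comm s]
    exact key t s hts

theorem tendsto_atTop_of_sub_mul_le_sub (hm : 0 < m)
    (hf : ∀ s t, s ≤ t → (t - s) * m ≤ f t - f s) : Tendsto f atTop atTop := by
  refine tendsto_atTop_mono' atTop (f₁ := fun t => f 0 + t * m) ?_ ?_
  · filter_upwards [eventually_ge_atTop 0] with t ht
    linarith [hf 0 t ht]
  · exact tendsto_atTop_add_const_left _ _ (tendsto_id.atTop_mul_const hm)

theorem tendsto_atBot_of_sub_mul_le_sub (hm : 0 < m)
    (hf : ∀ s t, s ≤ t → (t - s) * m ≤ f t - f s) : Tendsto f atBot atBot := by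
  refine tendsto_atBot_mono' atBot (f₁ := fun t => f 0 + t * m) ?_ ?_
  · filter_upwards [eventually_le_atBot 0] with t ht
    linarith [hf t 0 ht]
  · exact tendsto_atBot_add_const_left _ _ (tendsto_id.atBot_mul_const hm)

end IncrementBounds

section AffineSup

variable {ι : Type*} {S : ι → Prop} {h a : ι → ℝ} {s t : ℝ}

noncomputable def affineSup (S : ι → Prop) (h a : ι → ℝ) (t : ℝ) : ℝ :=
  sSup {y | ∃ i, S i ∧ y = h i + t * a i}

theorem bddAbove_affine {H K : ℝ} (hH : ∀ i, S i → h i ≤ H) (ha : ∀ i, S i → |a i| ≤ K)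
    (t : ℝ) : BddAbove {y | ∃ i, S i ∧ y = h i + t * a i} := by
  refine ⟨H + |t| * K, ?_⟩
  rintro y ⟨i, hi, rfl⟩
  have hta : t * a i ≤ |t| * K :=
    calc t * a i ≤ |t * a i| := le_abs_self _
      _ = |t| * |a i| := abs_mul _ _
      _ ≤ |t| * K := mul_le_mul_of_nonneg_left (ha i hi) (abs_nonneg t)
  linarith [hH i hi]

theorem le_affineSup (hb : BddAbove {y | ∃ i, S i ∧ y = h i + t * a i}) {i : ι} (hi : S i) :
    h i + t * a i ≤ affineSup S h a t :=
  le_csSup hb ⟨i, hi, rfl⟩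

theorem affineSup_le (hS : ∃ i, S i) {c : ℝ} (hc : ∀ i, S i → h i + t * a i ≤ c) :
    affineSup S h a t ≤ c := by
  obtain ⟨i₀, hi₀⟩ := hS
  refine csSup_le ⟨_, i₀, hi₀, rfl⟩ ?_
  rintro y ⟨i, hi, rfl⟩
  exact hc i hi

theorem sub_mul_le_affineSup_sub (hS : ∃ i, S i) (hb : BddAbove {y | ∃ i, S i ∧ y = h i + t * a i})
    {m : ℝ} (hm : ∀ i, S i → m ≤ a i) (hst : s ≤ t) :
    (t - s) * m ≤ affineSup S h a t - affineSup S h a s := by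
  have : affineSup S h a s ≤ affineSup S h a t - (t - s) * m := by
    refine affineSup_le hS fun i hi => ?_
    have := le_affineSup hb hi
    nlinarith [mul_le_mul_of_nonneg_left (hm i hi) (sub_nonneg.2 hst)]
  linarith

theorem affineSup_sub_le_sub_mul (hS : ∃ i, S i) (hb : BddAbove {y | ∃ i, S i ∧ y = h i + s * a i})
    {M : ℝ} (hM : ∀ i, S i → a i ≤ M) (hst : s ≤ t) :
    affineSup S h a t - affineSup S h a s ≤ (t - s) * M := by
  have : affineSup S h a t ≤ affineSup S h a s + (t - s) * M := by
    refine affineSup_le hS fun i hi => ?_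
    have := le_affineSup hb hi
    nlinarith [mul_le_mul_of_nonneg_left (hM i hi) (sub_nonneg.2 hst)]
  linarith

end AffineSup

theorem integral_mem_Icc_sSup_range {X : Type*} [MeasurableSpace X] {μ : Measure X}
    [IsProbabilityMeasure μ] {φ : X → ℝ} (hφ : Measurable φ) (hφ0 : ∀ x, 0 ≤ φ x)
    (hb : BddAbove (range φ)) : ∫ x, φ x ∂μ ∈ Icc 0 (sSup (range φ)) := by
  have hle : ∀ x, φ x ≤ sSup (range φ) := fun x => le_csSup hb ⟨x, rfl⟩
  have hint : Integrable φ μ := Integrable.of_bound hφ.aestronglyMeasurable (sSup (range φ))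
    (Eventually.of_forall fun x => by rw [Real.norm_of_nonneg (hφ0 x)]; exact hle x)
  refine ⟨integral_nonneg hφ0, ?_⟩
  calc ∫ x, φ x ∂μ ≤ ∫ _, sSup (range φ) ∂μ := integral_mono hint (integrable_const _) hle
    _ = sSup (range φ) := by simp

theorem stmt_3_general {X : Type*} [MeasurableSpace X]
    (T : X → X)
    (h : Measure X → ℝ)
    (φ : X → ℝ) (hφmeas : Measurable φ) (hφ0 : ∀ x, 0 ≤ φ x)
    (B : ℝ) (hφB : ∀ x, φ x ≤ B)
    (Inv : Measure X → Prop)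
    (hInv : ∀ μ, Inv μ ↔ IsProbabilityMeasure μ ∧ μ.map T = μ)
    (hne : ∃ μ, Inv μ)
    (H : ℝ) (hhH : ∀ μ, Inv μ → h μ ≤ H)
    (φ₀ : ℝ)
    (hφ₀ : φ₀ = sInf {y | ∃ μ, Inv μ ∧ y = ∫ x, φ x ∂μ})
    (hφ₀pos : 0 < φ₀)
    (P : ℝ → ℝ)
    (hP : ∀ t, P t = sSup {y | ∃ μ, Inv μ ∧ y = h μ + t * ∫ x, φ x ∂μ}) :
    StrictMono P ∧ Continuous P ∧
    (∀ t : ℝ, ∀ ε > 0, ε * φ₀ ≤ P (t + ε) - P t ∧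
        P (t + ε) - P t ≤ ε * (1 + sSup (Set.range φ))) ∧
    Filter.Tendsto P Filter.atTop Filter.atTop ∧
    Filter.Tendsto P Filter.atBot Filter.atBot ∧
    (∃! c : ℝ, P (-c) = 0) := by
  set M := sSup (range φ)
  have hint : ∀ μ, Inv μ → ∫ x, φ x ∂μ ∈ Icc 0 M := fun μ hμ =>
    have := ((hInv μ).1 hμ).1
    integral_mem_Icc_sSup_range hφmeas hφ0 ⟨B, forall_mem_range.2 hφB⟩
  have hφ₀le : ∀ μ, Inv μ → φ₀ ≤ ∫ x, φ x ∂μ := fun μ hμ =>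
    hφ₀ ▸ csInf_le ⟨0, by rintro y ⟨ν, hν, rfl⟩; exact (hint ν hν).1⟩ ⟨μ, hμ, rfl⟩
  have hbdd := bddAbove_affine hhH fun μ hμ =>
    abs_le.2 ⟨by linarith [(hint μ hμ).1, (hint μ hμ).2], (hint μ hμ).2⟩
  have hPeq : P = affineSup Inv h (fun μ => ∫ x, φ x ∂μ) := funext hP
  have hlo : ∀ s t, s ≤ t → (t - s) * φ₀ ≤ P t - P s := fun s t hst => by
    rw [hPeq]
    exact sub_mul_le_affineSup_sub hne (hbdd t) hφ₀le hst
  have hhi : ∀ s t, s ≤ t → P t - P s ≤ (t - s) * M := fun s t hst => by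
    rw [hPeq]
    exact affineSup_sub_le_sub_mul hne (hbdd s) (fun μ hμ => (hint μ hμ).2) hst
  have hmono := strictMono_of_sub_mul_le_sub hφ₀pos hlo
  have hcont := (lipschitzWith_of_sub_le_sub_mul hmono.monotone hhi).continuous
  have htop := tendsto_atTop_of_sub_mul_le_sub hφ₀pos hlo
  have hbot := tendsto_atBot_of_sub_mul_le_sub hφ₀pos hlo
  have hbij : Function.Bijective P := ⟨hmono.injective, hcont.surjective htop hbot⟩
  refine ⟨hmono, hcont, fun t ε hε => ?_, htop, hbot,
    (hbij.comp neg_involutive.bijective).existsUnique 0⟩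
  have hlo' := hlo t (t + ε) (by linarith)
  have hhi' := hhi t (t + ε) (by linarith)
  rw [add_sub_cancel_left] at hlo' hhi'
  exact ⟨hlo', hhi'.trans (by linarith)⟩

/-- The pressure function `t ↦ P(t·φ)` is strictly increasing, continuous,
satisfies the stated increment bounds, tends to `±∞`, and vanishes at a unique
parameter `-c`. -/
theorem stmt_3 {X : Type*} [MetricSpace X] [CompactSpace X] [MeasurableSpace X]
    [BorelSpace X]
    (T : X → X) (hT : Continuous T)
    (h : Measure X → ℝ)
    (φ : X → ℝ) (hφmeas : Measurable φ) (hφ0 : ∀ x, 0 ≤ φ x)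
    (B : ℝ) (hφB : ∀ x, φ x ≤ B)
    (Inv : Measure X → Prop)
    (hInv : ∀ μ, Inv μ ↔ IsProbabilityMeasure μ ∧ μ.map T = μ)
    (hne : ∃ μ, Inv μ)
    (hh0 : ∀ μ, Inv μ → 0 ≤ h μ)
    (H : ℝ) (hhH : ∀ μ, Inv μ → h μ ≤ H)
    (φ₀ : ℝ)
    (hφ₀ : φ₀ = sInf {y | ∃ μ, Inv μ ∧ y = ∫ x, φ x ∂μ})
    (hφ₀pos : 0 < φ₀)
    (P : ℝ → ℝ)
    (hP : ∀ t, P t = sSup {y | ∃ μ, Inv μ ∧ y = h μ + t * ∫ x, φ x ∂μ}) :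
    StrictMono P ∧ Continuous P ∧
    (∀ t : ℝ, ∀ ε > 0, ε * φ₀ ≤ P (t + ε) - P t ∧
        P (t + ε) - P t ≤ ε * (1 + sSup (Set.range φ))) ∧
    Filter.Tendsto P Filter.atTop Filter.atTop ∧
    Filter.Tendsto P Filter.atBot Filter.atBot ∧
    (∃! c : ℝ, P (-c) = 0) :=
  stmt_3_general T h φ hφmeas hφ0 B hφB Inv hInv hne H hhH φ₀ hφ₀ hφ₀pos P hP
end

section
/- For p_j > 0 with ∑_{j=1}^N p_j ≤ 1 and reals a_j: ∑_j p_j(−log p_j + a_j) ≤ 1/e + (∑_j p_j) · log(∑_i e^{a_i}). -/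
/-!
Since `-log p j + a j = log (exp (a j) / p j)`, the log-sum inequality (Jensen's inequality for the
concave `log`, with weights `p j / S` where `S = ∑ j, p j`) bounds the left side by
`S * log ((∑ i, exp (a i)) / S) = S * log (∑ i, exp (a i)) - S * log S`,
and `-S * log S ≤ 1 / e` for every `S ≥ 0`.
-/

open Real Finset

theorem Real.neg_mul_log_le_inv_exp_one {x : ℝ} (hx : 0 ≤ x) : -(x * log x) ≤ 1 / exp 1 := by
  rcases hx.eq_or_lt with rfl | hx
  · simp [(exp_pos 1).le]
  -- `y ≤ exp (y - 1)` at `y = -log x`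
  have h := add_one_le_exp (-log x - 1)
  rw [exp_sub, exp_neg, exp_log hx] at h
  calc -(x * log x) = x * (-log x - 1 + 1) := by ring
    _ ≤ x * (x⁻¹ / exp 1) := by gcongr
    _ = 1 / exp 1 := by field_simp

theorem Real.sum_mul_log_div_le {ι : Type*} (s : Finset ι) {p b : ι → ℝ}
    (hp : ∀ i ∈ s, 0 < p i) (hb : ∀ i ∈ s, 0 < b i) :
    ∑ i ∈ s, p i * log (b i / p i) ≤ (∑ i ∈ s, p i) * log ((∑ i ∈ s, b i) / ∑ i ∈ s, p i) := by
  rcases s.eq_empty_or_nonempty with rfl | hs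
  · simp
  set S := ∑ i ∈ s, p i
  have hS : 0 < S := sum_pos hp hs
  have jensen := strictConcaveOn_log_Ioi.concaveOn.le_map_sum (t := s) (w := fun i ↦ p i / S)
    (p := fun i ↦ b i / p i) (fun i hi ↦ (div_pos (hp i hi) hS).le)
    (by rw [← sum_div, div_self hS.ne']) (fun i hi ↦ div_pos (hb i hi) (hp i hi))
  have hmean : ∑ i ∈ s, p i / S * (b i / p i) = (∑ i ∈ s, b i) / S := by
    rw [sum_div]
    exact sum_congr rfl fun i hi ↦ by field_simp [(hp i hi).ne']
  simp only [smul_eq_mul, hmean] at jensen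
  calc ∑ i ∈ s, p i * log (b i / p i) = S * ∑ i ∈ s, p i / S * log (b i / p i) := by
        rw [mul_sum]; exact sum_congr rfl fun i _ ↦ by field_simp
    _ ≤ S * log ((∑ i ∈ s, b i) / S) := by gcongr

theorem stmt_8_general {ι : Type*} [Fintype ι] (p a : ι → ℝ)
    (hp : ∀ i, 0 < p i) :
    ∑ j, p j * (-Real.log (p j) + a j)
      ≤ 1 / Real.exp 1 + (∑ j, p j) * Real.log (∑ i, Real.exp (a i)) := by
  rcases isEmpty_or_nonempty ι with _ | _
  · simp [(exp_pos 1).le]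
  set S := ∑ j, p j
  set Q := ∑ i, exp (a i)
  have hS : 0 < S := sum_pos (fun i _ ↦ hp i) univ_nonempty
  have hQ : 0 < Q := sum_pos (fun i _ ↦ exp_pos (a i)) univ_nonempty
  have hterm (j : ι) : -log (p j) + a j = log (exp (a j) / p j) := by
    rw [log_div (exp_pos _).ne' (hp j).ne', log_exp]; ring
  calc ∑ j, p j * (-log (p j) + a j) = ∑ j, p j * log (exp (a j) / p j) := by simp only [hterm]
    _ ≤ S * log (Q / S) := sum_mul_log_div_le univ (fun j _ ↦ hp j) (fun j _ ↦ exp_pos (a j))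
    _ = -(S * log S) + S * log Q := by rw [log_div hQ.ne' hS.ne']; ring
    _ ≤ 1 / exp 1 + S * log Q := by gcongr; exact neg_mul_log_le_inv_exp_one hS.le

/-- Convexity inequality (20.3.5) of Katok–Hasselblatt. -/
theorem stmt_8 {ι : Type*} [Fintype ι] (p a : ι → ℝ)
    (hp : ∀ i, 0 < p i) (hsum : ∑ i, p i ≤ 1) :
    ∑ j, p j * (-Real.log (p j) + a j)
      ≤ 1 / Real.exp 1 + (∑ j, p j) * Real.log (∑ i, Real.exp (a i)) :=
  stmt_8_general p a hp
end
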